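/- arXiv:1911.03525 — 5 statements merged into one kernel-verified Lean document; each statement's English description precedes it below -/
import Mathlib

section
/- Let T = (T_1,…,T_d) be a commuting d-tuple of operators on a Hilbert space H, and suppose w ∈ ℂ^d with ‖w‖ = 1 is a joint eigenvalue of T, with joint eigenspace H_w. If T is a K-contraction for a kernel whose coefficient sequence (b_n) satisfies b_1 > 0 and ∑_{n=1}^∞ b_n = 1, then H_w is a reducing subspace for T on which each T_j acts as the scalar w_j. (In particular T restricted to H_w is a spherical unitary.) -/
/-!
For a joint eigenvector `x`, Cauchy–Schwarz applied to `⟪T^{*α} x, x⟫ = conj(w^α) ‖x‖²` gives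
`‖T^{*α} x‖ ≥ |w^α| ‖x‖`, and by the multinomial theorem `∑_{|α|=m} (m!/α!) |w^α|² = ‖w‖^{2m} = 1`.
Hence every level `∑_{|α|=m} (m!/α!) ‖T^{*α} x‖²` is at least `‖x‖²`. As `∑ b_n = 1`, the
K-contraction inequality at `x` leaves no room above `‖x‖²` for any level with `b_n > 0`, in
particular for the first one, `∑_j ‖T_j^* x‖²`. So `‖T_j^* x‖ = |w_j| ‖x‖` for every `j`: equality
in Cauchy–Schwarz, which forces `T_j^* x = conj(w_j) x`.
-/

noncomputable section

open scoped BigOperators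

/-- `T^α = T_1^{α_1} ⋯ T_d^{α_d}`. -/
def opPow {H : Type*} [NormedAddCommGroup H] [NormedSpace ℂ H] {d : ℕ}
    (T : Fin d → (H →L[ℂ] H)) (α : Fin d → ℕ) : H →L[ℂ] H :=
  (List.ofFn fun j => (T j) ^ (α j)).prod

open Finset ContinuousLinearMap

theorem List.prod_ofFn_mulSingle {M : Type*} [Monoid M] :
    ∀ {n : ℕ} (j : Fin n) (a : M), (List.ofFn (Pi.mulSingle j a)).prod = a
  | n + 1, j, a => by
    rw [List.ofFn_succ, List.prod_cons]
    rcases Fin.eq_zero_or_eq_succ j with rfl | ⟨k, rfl⟩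
    · simp [List.prod_eq_one, Fin.succ_ne_zero]
    · have htail : (fun i : Fin n => (Pi.mulSingle k.succ a : Fin (n + 1) → M) i.succ)
          = (Pi.mulSingle k a : Fin n → M) :=
        funext fun i => by simp [Pi.mulSingle_apply]
      rw [htail, List.prod_ofFn_mulSingle k a, Pi.mulSingle_eq_of_ne (Fin.succ_ne_zero k).symm,
        one_mul]

section Operators

variable {H : Type*} [NormedAddCommGroup H]

theorem List.prod_ofFn_apply_of_apply_eq_smul [NormedSpace ℂ H] :
    ∀ {n : ℕ} (A : Fin n → H →L[ℂ] H) (c : Fin n → ℂ) {x : H},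
      (∀ i, A i x = c i • x) → (List.ofFn A).prod x = (∏ i, c i) • x
  | 0, _, _, _, _ => by simp
  | n + 1, A, c, x, hx => by
    rw [List.ofFn_succ, List.prod_cons, mul_apply_eq_comp,
      List.prod_ofFn_apply_of_apply_eq_smul (fun i => A i.succ) (fun i => c i.succ)
        fun i => hx i.succ, map_smul, hx 0, Fin.prod_univ_succ, smul_smul, mul_comm]

theorem pow_apply_of_apply_eq_smul [NormedSpace ℂ H] {A : H →L[ℂ] H} {c : ℂ} {x : H}
    (hx : A x = c • x) (k : ℕ) : (A ^ k) x = c ^ k • x := by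
  induction k with
  | zero => simp
  | succ k ih => rw [pow_succ', mul_apply_eq_comp, ih, map_smul, hx, smul_smul, pow_succ]

theorem opPow_apply_of_forall_apply_eq_smul [NormedSpace ℂ H] {d : ℕ}
    {T : Fin d → H →L[ℂ] H} {c : Fin d → ℂ} {x : H} (hx : ∀ j, T j x = c j • x)
    (α : Fin d → ℕ) : opPow T α x = (∏ i, c i ^ α i) • x :=
  List.prod_ofFn_apply_of_apply_eq_smul _ _ fun i => pow_apply_of_apply_eq_smul (hx i) (α i)

theorem opPow_single [NormedSpace ℂ H] {d : ℕ} (T : Fin d → H →L[ℂ] H) (j : Fin d) :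
    opPow T (Pi.single j 1) = T j := by
  have hpow : (fun i => T i ^ (Pi.single j 1 : Fin d → ℕ) i) = Pi.mulSingle j (T j) := by
    ext1 i
    rcases eq_or_ne i j with rfl | hij <;> simp [*]
  rw [opPow, hpow, List.prod_ofFn_mulSingle]

variable [InnerProductSpace ℂ H] [CompleteSpace H]

theorem norm_mul_norm_le_norm_adjoint_apply {A : H →L[ℂ] H} {c : ℂ} {x : H}
    (hx : A x = c • x) : ‖c‖ * ‖x‖ ≤ ‖adjoint A x‖ := by
  rcases eq_or_ne x 0 with rfl | hx0
  · simp
  have hinner : ‖c‖ * ‖x‖ * ‖x‖ = ‖(inner ℂ (adjoint A x) x : ℂ)‖ := by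
    rw [adjoint_inner_left, hx, inner_smul_right, inner_self_eq_norm_sq_to_K]
    simp [mul_assoc, sq]
  have := hinner ▸ norm_inner_le_norm (𝕜 := ℂ) (adjoint A x) x
  exact le_of_mul_le_mul_right this (norm_pos_iff.mpr hx0)

theorem adjoint_apply_eq_conj_smul_of_norm_le {A : H →L[ℂ] H} {c : ℂ} {x : H}
    (hx : A x = c • x) (hle : ‖adjoint A x‖ ≤ ‖c‖ * ‖x‖) :
    adjoint A x = starRingEnd ℂ c • x := by
  have hre : RCLike.re (inner ℂ (adjoint A x) (starRingEnd ℂ c • x)) = ‖c‖ ^ 2 * ‖x‖ ^ 2 := by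
    rw [inner_smul_right, adjoint_inner_left, hx, inner_smul_right,
      inner_self_eq_norm_sq_to_K, ← mul_assoc, Complex.conj_mul']
    simp [← Complex.ofReal_pow]
  have hsq : ‖adjoint A x - starRingEnd ℂ c • x‖ ^ 2 ≤ 0 := by
    rw [norm_sub_sq (𝕜 := ℂ), hre, norm_smul, RCLike.norm_conj]
    nlinarith [norm_nonneg (adjoint A x), mul_nonneg (norm_nonneg c) (norm_nonneg x)]
  exact sub_eq_zero.mp (norm_eq_zero.mp (pow_eq_zero_iff two_ne_zero |>.mp
    (le_antisymm hsq (sq_nonneg _))))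

end Operators

theorem sum_antidiagonalTuple_factorial_div_mul_prod_pow {K : Type*} [Field K] [CharZero K]
    {d : ℕ} (c : Fin d → K) (m : ℕ) :
    ∑ α ∈ Nat.antidiagonalTuple d m,
        ((m.factorial : K) / ∏ i, ((α i).factorial : K)) * ∏ i, c i ^ α i = (∑ i, c i) ^ m := by
  rw [sum_pow_eq_sum_piAntidiag, piAntidiag_univ_fin_eq_antidiagonalTuple]
  refine sum_congr rfl fun α hα => ?_
  rw [← Nat.mem_antidiagonalTuple.mp hα, ← Nat.multinomial_spec, Nat.cast_mul, Nat.cast_prod,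
    mul_div_cancel_left₀ _ (prod_ne_zero_iff.mpr fun i _ =>
      Nat.cast_ne_zero.mpr (Nat.factorial_ne_zero _))]

/-- `⟪(∑_{|α| = m} (m!/α!) T^α T^{*α}) x, x⟫`, the `m`-th level of the K-contraction form. -/
def levelSum {H : Type*} [NormedAddCommGroup H] [InnerProductSpace ℂ H] [CompleteSpace H]
    {d : ℕ} (T : Fin d → H →L[ℂ] H) (x : H) (m : ℕ) : ℝ :=
  ∑ α ∈ Nat.antidiagonalTuple d m,
    ((m.factorial : ℝ) / ∏ j, ((α j).factorial : ℝ)) * ‖adjoint (opPow T α) x‖ ^ 2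

section JointEigenvector

variable {H : Type*} [NormedAddCommGroup H] [InnerProductSpace ℂ H] [CompleteSpace H] {d : ℕ}
  {T : Fin d → H →L[ℂ] H} {w : Fin d → ℂ} {x : H}

theorem factorial_div_mul_norm_prod_pow_sq_mul_le (hx : ∀ j, T j x = w j • x) (m : ℕ)
    (α : Fin d → ℕ) :
    ((m.factorial : ℝ) / ∏ i, ((α i).factorial : ℝ)) * ‖∏ i, w i ^ α i‖ ^ 2 * ‖x‖ ^ 2
      ≤ ((m.factorial : ℝ) / ∏ i, ((α i).factorial : ℝ)) * ‖adjoint (opPow T α) x‖ ^ 2 := by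
  have hle := norm_mul_norm_le_norm_adjoint_apply (opPow_apply_of_forall_apply_eq_smul hx α)
  rw [mul_assoc, ← mul_pow]
  gcongr

theorem sum_factorial_div_mul_norm_prod_pow_sq_mul (hw : ∑ j, ‖w j‖ ^ 2 = 1) (m : ℕ) (r : ℝ) :
    ∑ α ∈ Nat.antidiagonalTuple d m,
      ((m.factorial : ℝ) / ∏ i, ((α i).factorial : ℝ)) * ‖∏ i, w i ^ α i‖ ^ 2 * r = r := by
  simp_rw [← sum_mul, norm_prod, norm_pow, ← prod_pow, ← pow_mul, mul_comm _ 2, pow_mul]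
  rw [sum_antidiagonalTuple_factorial_div_mul_prod_pow, hw, one_pow, one_mul]

theorem norm_sq_le_levelSum (hx : ∀ j, T j x = w j • x) (hw : ∑ j, ‖w j‖ ^ 2 = 1) (m : ℕ) :
    ‖x‖ ^ 2 ≤ levelSum T x m :=
  sum_factorial_div_mul_norm_prod_pow_sq_mul hw m (‖x‖ ^ 2) ▸
    sum_le_sum fun α _ => factorial_div_mul_norm_prod_pow_sq_mul_le hx m α

theorem norm_adjoint_apply_le_of_levelSum_one_le (hx : ∀ j, T j x = w j • x)
    (hw : ∑ j, ‖w j‖ ^ 2 = 1) (h1 : levelSum T x 1 ≤ ‖x‖ ^ 2) (j : Fin d) :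
    ‖adjoint (T j) x‖ ≤ ‖w j‖ * ‖x‖ := by
  have hsum := le_antisymm (norm_sq_le_levelSum hx hw 1) h1
  rw [levelSum, ← sum_factorial_div_mul_norm_prod_pow_sq_mul hw 1 (‖x‖ ^ 2)] at hsum
  have hj := (sum_eq_sum_iff_of_le fun α _ => factorial_div_mul_norm_prod_pow_sq_mul_le hx 1 α).mp
    hsum (Pi.single j 1) (by simp [Nat.mem_antidiagonalTuple])
  have hsq : ‖adjoint (T j) x‖ ^ 2 = (‖w j‖ * ‖x‖) ^ 2 := by
    simpa [opPow_single, mul_pow, Pi.single_apply, apply_ite Nat.factorial, mul_assoc] using hj.symm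
  exact ((pow_left_inj₀ (norm_nonneg _) (by positivity) two_ne_zero).mp hsq).le

end JointEigenvector

theorem le_of_hasSum_one_of_forall_sum_mul_le {b S : ℕ → ℝ} {s : ℝ} (hb : ∀ n, 0 ≤ b n)
    (hb0 : 0 < b 0) (hsum : HasSum b 1) (hS : ∀ n, s ≤ S n)
    (hle : ∀ N, ∑ n ∈ range N, b n * S n ≤ s) : S 0 ≤ s := by
  have hbound : ∀ N, b 0 * (S 0 - s) ≤ s * (1 - ∑ n ∈ range (N + 1), b n) := fun N => by
    have hhead : b 0 * (S 0 - s) ≤ ∑ n ∈ range (N + 1), b n * (S n - s) :=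
      single_le_sum (f := fun n => b n * (S n - s))
        (fun n _ => mul_nonneg (hb n) (sub_nonneg.mpr (hS n))) (mem_range.mpr N.succ_pos)
    have hsplit : ∑ n ∈ range (N + 1), b n * (S n - s)
        = ∑ n ∈ range (N + 1), b n * S n - s * ∑ n ∈ range (N + 1), b n := by
      rw [mul_sum, ← sum_sub_distrib]
      exact sum_congr rfl fun n _ => by ring
    linarith [hle (N + 1)]
  have htail : Filter.Tendsto (fun N => s * (1 - ∑ n ∈ range (N + 1), b n)) Filter.atTop
      (nhds 0) := by
    simpa using
      ((hsum.tendsto_sum_nat.comp (Filter.tendsto_add_atTop_nat 1)).const_sub 1).const_mul s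
  nlinarith [ge_of_tendsto' htail hbound]

theorem joint_eigenspace_reduces_K_contraction_general
    {d : ℕ} {H : Type*} [NormedAddCommGroup H] [InnerProductSpace ℂ H] [CompleteSpace H]
    (T : Fin d → (H →L[ℂ] H))
    (b : ℕ → ℝ) (hb : ∀ n, 0 ≤ b n) (hb1 : 0 < b 1)
    (hmax : HasSum (fun n : ℕ => b (n + 1)) 1)
    -- T is a K-contraction: ∑_{n≥1} b_n ∑_{|α|=n} (n!/α!) T^α T^{*α} ≤ I,
    -- expressed via quadratic forms and partial sums:
    (hK : ∀ (x : H) (N : ℕ),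
      ∑ n ∈ Finset.range N, b (n + 1) *
        ∑ α ∈ Finset.Nat.antidiagonalTuple d (n + 1),
          (((n + 1).factorial : ℝ) / ∏ j, ((α j).factorial : ℝ)) *
            ‖ContinuousLinearMap.adjoint (opPow T α) x‖ ^ 2
      ≤ ‖x‖ ^ 2)
    (w : EuclideanSpace ℂ (Fin d)) (hw : ‖w‖ = 1) :
    ∀ x : H, (∀ j, T j x = w j • x) →
      ∀ j, ContinuousLinearMap.adjoint (T j) x = (starRingEnd ℂ) (w j) • x := by
  intro x hx j
  have hw' : ∑ j, ‖w j‖ ^ 2 = 1 := by rw [← EuclideanSpace.norm_sq_eq, hw, one_pow]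
  have hlevel1 : levelSum T x 1 ≤ ‖x‖ ^ 2 :=
    le_of_hasSum_one_of_forall_sum_mul_le (b := fun n => b (n + 1))
      (S := fun n => levelSum T x (n + 1)) (fun n => hb _) hb1 hmax
      (fun n => norm_sq_le_levelSum hx hw' _) (hK x)
  exact adjoint_apply_eq_conj_smul_of_norm_le (hx j)
    (norm_adjoint_apply_le_of_levelSum_one_le hx hw' hlevel1 j)

theorem joint_eigenspace_reduces_K_contraction
    {d : ℕ} {H : Type*} [NormedAddCommGroup H] [InnerProductSpace ℂ H] [CompleteSpace H]
    (T : Fin d → (H →L[ℂ] H))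
    (hcomm : ∀ i j, T i * T j = T j * T i)
    (b : ℕ → ℝ) (hb : ∀ n, 0 ≤ b n) (hb1 : 0 < b 1)
    (hmax : HasSum (fun n : ℕ => b (n + 1)) 1)
    -- T is a K-contraction: ∑_{n≥1} b_n ∑_{|α|=n} (n!/α!) T^α T^{*α} ≤ I,
    -- expressed via quadratic forms and partial sums:
    (hK : ∀ (x : H) (N : ℕ),
      ∑ n ∈ Finset.range N, b (n + 1) *
        ∑ α ∈ Finset.Nat.antidiagonalTuple d (n + 1),
          (((n + 1).factorial : ℝ) / ∏ j, ((α j).factorial : ℝ)) *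
            ‖ContinuousLinearMap.adjoint (opPow T α) x‖ ^ 2
      ≤ ‖x‖ ^ 2)
    (w : EuclideanSpace ℂ (Fin d)) (hw : ‖w‖ = 1)
    -- w is a joint eigenvalue:
    (hev : ∃ x : H, x ≠ 0 ∧ ∀ j, T j x = w j • x) :
    ∀ x : H, (∀ j, T j x = w j • x) →
      ∀ j, ContinuousLinearMap.adjoint (T j) x = (starRingEnd ℂ) (w j) • x :=
  joint_eigenspace_reduces_K_contraction_general T b hb hb1 hmax hK w hw

end
end

section
/- Let H be a regular unitarily invariant space with the Corona property, and let a be a weak-* closed ideal of M(H). Then supp(a) = ⋂_{f ∈ a} AZ(f), where AZ(f) is the approximate zero set of the single function f. In particular, the approximate zero set of a consists exactly of the common approximate zeros of its elements. -/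
/-!
STATEMENT 11: For a regular unitarily invariant space with the Corona property
and a (weak-* closed) ideal a of M(H): supp(a) = ⋂_{f ∈ a} AZ(f), the set of
common approximate zeros of the members of a.

The Corona property is encoded in its standard form: any finite family of
multipliers bounded below in modulus on the ball generates the whole algebra.
The structural facts of regular unitarily invariant spaces that are used are
that multipliers are bounded and that functions holomorphic on a neighbourhood
of the closed ball are multipliers.
-/

set_option synthInstance.maxHeartbeats 1000000
set_option maxHeartbeats 1000000

noncomputable section

open scoped BigOperators

abbrev Ed (d : ℕ) := EuclideanSpace ℂ (Fin d)

abbrev Ball (d : ℕ) : Type _ := ↥(Metric.ball (0 : Ed d) 1)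

/-- The support of an ideal of the multiplier algebra. -/
def idealSupp {d : ℕ} {A : Subalgebra ℂ (Ball d → ℂ)} (X : Fin d → A) (a : Ideal A) :
    Set (Ed d) :=
  {z | ¬ ∃ f ∈ a, ∃ c : ℂ, c ≠ 0 ∧ ∃ g : Fin d → A,
      f = algebraMap ℂ A c + ∑ j, (X j - algebraMap ℂ A (z j)) * g j}

/-- The approximate zero set of a family of multipliers. -/
def AZset {d : ℕ} {A : Subalgebra ℂ (Ball d → ℂ)} (S : Set A) : Set (Ed d) :=
  {z | z ∈ Metric.closedBall (0 : Ed d) 1 ∧ ∃ w : ℕ → Ball d,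
      Filter.Tendsto (fun n => ((w n : Ed d))) Filter.atTop (nhds z) ∧
      ∀ f ∈ S, Filter.Tendsto (fun n => (f : Ball d → ℂ) (w n)) Filter.atTop (nhds 0)}

/-!
If `z ∉ AZ(f)` for some `f ∈ a`, then `|f(w)| + ∑ |wⱼ - zⱼ|` is bounded below on the ball, so the
Corona property applied to `f, X₁ - z₁, …, X_d - z_d` gives `f g₀ + ∑ (Xⱼ - zⱼ) gⱼ = 1`, which
puts `z` outside `supp a`. Conversely, an element `f = c + ∑ (Xⱼ - zⱼ) gⱼ` of `a` with `c ≠ 0`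
satisfies `f(w) → c` as `w → z`, because the `gⱼ` are bounded; so `z ∉ AZ(f)`.
-/

open Filter Topology

lemma EuclideanSpace.norm_le_sum_norm_apply {𝕜 n : Type*} [RCLike 𝕜] [Fintype n]
    (v : EuclideanSpace 𝕜 n) :
    ‖v‖ ≤ ∑ j, ‖v j‖ := by
  rw [EuclideanSpace.norm_eq]
  calc √(∑ j, ‖v j‖ ^ 2) ≤ √((∑ j, ‖v j‖) ^ 2) :=
        Real.sqrt_le_sqrt (Finset.sum_sq_le_sq_sum_of_nonneg fun _ _ => norm_nonneg _)
    _ = ∑ j, ‖v j‖ := Real.sqrt_sq (Finset.sum_nonneg fun _ _ => norm_nonneg _)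

section

variable {d : ℕ} {A : Subalgebra ℂ (Ball d → ℂ)}

lemma sub_algebraMap_apply (p : A) (c : ℂ) (w : Ball d) :
    ((p - algebraMap ℂ A c : A) : Ball d → ℂ) w = (p : Ball d → ℂ) w - c := by
  simp

lemma mem_AZset_singleton {f : A} {z : Ed d} {w : ℕ → Ball d}
    (hwz : Tendsto (fun n => (w n : Ed d)) atTop (𝓝 z))
    (hfw : Tendsto (fun n => (f : Ball d → ℂ) (w n)) atTop (𝓝 0)) :
    z ∈ AZset ({f} : Set A) := by
  refine ⟨?_, w, hwz, fun g hg => by rwa [Set.mem_singleton_iff.mp hg]⟩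
  exact Metric.isClosed_closedBall.mem_of_tendsto hwz
    (Eventually.of_forall fun n => Metric.ball_subset_closedBall (w n).2)

lemma exists_pos_le_of_notMem_AZset {f : A} {z : Ed d} (hz : z ∉ AZset ({f} : Set A)) :
    ∃ ε > 0, ∀ w : Ball d, ε ≤ ‖(f : Ball d → ℂ) w‖ + ∑ j, ‖(w : Ed d) j - z j‖ := by
  by_contra! hsmall
  choose w hw using fun n : ℕ => hsmall (1 / (n + 1)) Nat.one_div_pos_of_nat
  refine hz (mem_AZset_singleton (w := w) ?_ ?_)
  · rw [tendsto_iff_norm_sub_tendsto_zero]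
    refine squeeze_zero (fun _ => norm_nonneg _) (fun n => ?_)
      tendsto_one_div_add_atTop_nhds_zero_nat
    calc ‖(w n : Ed d) - z‖ ≤ ∑ j, ‖(w n : Ed d) j - z j‖ :=
          EuclideanSpace.norm_le_sum_norm_apply _
      _ ≤ _ := le_add_of_nonneg_left (norm_nonneg _)
      _ ≤ _ := (hw n).le
  · refine squeeze_zero_norm (fun n => ?_) tendsto_one_div_add_atTop_nhds_zero_nat
    exact (le_add_of_nonneg_right (Finset.sum_nonneg fun _ _ => norm_nonneg _)).trans (hw n).le

lemma notMem_idealSupp_of_forall_le (X : Fin d → A)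
    (hX : ∀ (j : Fin d) (w : Ball d), (X j : Ball d → ℂ) w = (w : Ed d) j)
    (hCorona : ∀ (m : ℕ) (F : Fin m → A),
      (∃ ε : ℝ, 0 < ε ∧ ∀ w : Ball d, ε ≤ ∑ i, ‖(F i : Ball d → ℂ) w‖) →
      ∃ G : Fin m → A, ∑ i, F i * G i = 1)
    {a : Ideal A} {f : A} (hf : f ∈ a) {z : Ed d} {ε : ℝ} (hε : 0 < ε)
    (hbound : ∀ w : Ball d, ε ≤ ‖(f : Ball d → ℂ) w‖ + ∑ j, ‖(w : Ed d) j - z j‖) :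
    z ∉ idealSupp X a := by
  obtain ⟨G, hG⟩ := hCorona (d + 1) (Fin.cons f fun j => X j - algebraMap ℂ A (z j))
    ⟨ε, hε, fun w => by simpa [Fin.sum_univ_succ, sub_algebraMap_apply, hX] using hbound w⟩
  simp only [Fin.sum_univ_succ, Fin.cons_zero, Fin.cons_succ] at hG
  refine fun hz => hz ⟨-(f * G 0), a.neg_mem (a.mul_mem_right _ hf), -1, by norm_num,
    fun j => G j.succ, ?_⟩
  rw [map_neg, map_one]
  linear_combination -hG

lemma tendsto_algebraMap_add_sum_apply (X : Fin d → A)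
    (hX : ∀ (j : Fin d) (w : Ball d), (X j : Ball d → ℂ) w = (w : Ed d) j)
    (hbd : ∀ f : A, ∃ C : ℝ, ∀ w : Ball d, ‖(f : Ball d → ℂ) w‖ ≤ C)
    (c : ℂ) (g : Fin d → A) {z : Ed d} {w : ℕ → Ball d}
    (hwz : Tendsto (fun n => (w n : Ed d)) atTop (𝓝 z)) :
    Tendsto (fun n => ((algebraMap ℂ A c + ∑ j, (X j - algebraMap ℂ A (z j)) * g j : A) :
      Ball d → ℂ) (w n)) atTop (𝓝 c) := by
  have hterm (j : Fin d) : Tendsto (fun n => ((w n : Ed d) j - z j) * (g j : Ball d → ℂ) (w n))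
      atTop (𝓝 0) := by
    refine Tendsto.zero_mul_isBoundedUnder_le ?_
      (isBoundedUnder_of ((hbd (g j)).imp fun _ hC n => hC _))
    simpa using ((PiLp.continuous_apply 2 _ j).tendsto z).comp hwz |>.sub_const (z j)
  simpa [sub_algebraMap_apply, hX] using
    (tendsto_finsetSum Finset.univ fun j _ => hterm j).const_add c

end

theorem supp_eq_iInter_AZ_general {d : ℕ} {A : Subalgebra ℂ (Ball d → ℂ)}
    (X : Fin d → A)
    (hX : ∀ (j : Fin d) (w : Ball d), (X j : Ball d → ℂ) w = (w : Ed d) j)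
    (hbd : ∀ f : A, ∃ C : ℝ, ∀ w : Ball d, ‖(f : Ball d → ℂ) w‖ ≤ C)
    -- Corona property:
    (hCorona : ∀ (m : ℕ) (F : Fin m → A),
      (∃ ε : ℝ, 0 < ε ∧ ∀ w : Ball d, ε ≤ ∑ i, ‖(F i : Ball d → ℂ) w‖) →
      ∃ G : Fin m → A, ∑ i, F i * G i = 1)
    (a : Ideal A) :
    idealSupp X a = ⋂ f ∈ (a : Set A), AZset ({f} : Set A) := by
  ext z
  simp only [Set.mem_iInter, SetLike.mem_coe]
  constructor
  · intro hz f hf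
    by_contra hfz
    obtain ⟨ε, hε, hbound⟩ := exists_pos_le_of_notMem_AZset hfz
    exact notMem_idealSupp_of_forall_le X hX hCorona hf hε hbound hz
  · rintro hz ⟨f, hf, c, hc, g, rfl⟩
    obtain ⟨-, w, hwz, hfw⟩ := hz _ hf
    exact hc <| tendsto_nhds_unique
      (tendsto_algebraMap_add_sum_apply X hX hbd c g hwz) (hfw _ rfl)

theorem supp_eq_iInter_AZ {d : ℕ} {A : Subalgebra ℂ (Ball d → ℂ)}
    (X : Fin d → A)
    (hX : ∀ (j : Fin d) (w : Ball d), (X j : Ball d → ℂ) w = (w : Ed d) j)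
    (hbd : ∀ f : A, ∃ C : ℝ, ∀ w : Ball d, ‖(f : Ball d → ℂ) w‖ ≤ C)
    (Hhol : ∀ F : Ed d → ℂ,
      (∃ U : Set (Ed d), IsOpen U ∧ Metric.closedBall (0 : Ed d) 1 ⊆ U ∧
        DifferentiableOn ℂ F U) →
      (fun w : Ball d => F (w : Ed d)) ∈ A)
    -- Corona property:
    (hCorona : ∀ (m : ℕ) (F : Fin m → A),
      (∃ ε : ℝ, 0 < ε ∧ ∀ w : Ball d, ε ≤ ∑ i, ‖(F i : Ball d → ℂ) w‖) →
      ∃ G : Fin m → A, ∑ i, F i * G i = 1)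
    (a : Ideal A) :
    idealSupp X a = ⋂ f ∈ (a : Set A), AZset ({f} : Set A) :=
  supp_eq_iInter_AZ_general X hX hbd hCorona a

end
end

section
/- Let a be a weak-* closed prime ideal of M(H) whose zero set Z_{B_d}(a) has positive dimension as a complex analytic variety (hence supp(a) contains a biholomorphic image of a ball of positive dimension and is not contained in any small Euclidean ball). Then the localizable set Loc(a) is empty. -/
/-!
STATEMENT 13: If a is a (weak-* closed) prime ideal of the multiplier algebra
whose zero set Z_{B_d}(a) has positive dimension as a complex analytic variety
(encoded: Z_{B_d}(a) contains the image of an injective holomorphic disc),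
then the localizable set Loc(a) is empty.
-/

set_option synthInstance.maxHeartbeats 1000000
set_option maxHeartbeats 1000000

noncomputable section

open scoped BigOperators

/-- Zero set in the open ball of a family of multipliers. -/
def ZBall {d : ℕ} {A : Subalgebra ℂ (Ball d → ℂ)} (S : Set A) : Set (Ed d) :=
  {z | ∃ hz : z ∈ Metric.ball (0 : Ed d) 1, ∀ f ∈ S, (f : Ball d → ℂ) ⟨z, hz⟩ = 0}

/-- The set of localizable points of an ideal. -/
def LocSet {d : ℕ} {A : Subalgebra ℂ (Ball d → ℂ)} (X : Fin d → A) (a : Ideal A) :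
    Set (Ed d) :=
  {z | ∀ r : ℝ, 0 < r → ∃ b c : Ideal A, ¬ c ≤ a ∧ b * c ≤ a ∧
      idealSupp X a ∩ idealSupp X b ⊆ Metric.ball z r}

theorem prime_positive_dimension_loc_empty {d : ℕ} {A : Subalgebra ℂ (Ball d → ℂ)}
    (X : Fin d → A)
    (hX : ∀ (j : Fin d) (w : Ball d), (X j : Ball d → ℂ) w = (w : Ed d) j)
    (a : Ideal A) (hprime : a.IsPrime)
    -- the zero set of a has positive dimension: it contains an injective
    -- holomorphic disc
    (hdim : ∃ φ : ℂ → Ed d,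
      DifferentiableOn ℂ φ (Metric.ball (0 : ℂ) 1) ∧
      Set.InjOn φ (Metric.ball (0 : ℂ) 1) ∧
      φ '' (Metric.ball (0 : ℂ) 1) ⊆ ZBall (a : Set A)) :
    LocSet X a = ∅ := by
  obtain ⟨φ, hφd, hφinj, hφsub⟩ := hdim
  -- ZBall a ⊆ idealSupp X a
  have hZ : ZBall (a : Set A) ⊆ idealSupp X a := by
    rintro w ⟨hw, hvan⟩
    rintro ⟨f, hf, c, hc, g, heq⟩
    have h0 := hvan f hf
    have h1 := congrArg (fun F : A => (F : Ball d → ℂ) ⟨w, hw⟩) heq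
    simp only [h0] at h1
    simp only [Subalgebra.coe_add, Subalgebra.coe_mul, Subalgebra.coe_sub,
      AddSubmonoidClass.coe_finset_sum, Pi.add_apply, Pi.mul_apply, Pi.sub_apply,
      Finset.sum_apply] at h1
    have halg : ∀ (t : ℂ), ((algebraMap ℂ A t : A) : Ball d → ℂ) ⟨w, hw⟩ = t := by
      intro t
      rfl
    rw [halg] at h1
    have : ∀ j, ((X j : Ball d → ℂ) ⟨w, hw⟩ - ((algebraMap ℂ A (w j) : A) : Ball d → ℂ) ⟨w, hw⟩)
        * (g j : Ball d → ℂ) ⟨w, hw⟩ = 0 := by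
      intro j
      rw [hX j, halg]
      simp
    rw [Finset.sum_congr rfl (fun j _ => this j), Finset.sum_const_zero] at h1
    simp at h1
    exact hc h1.symm
  -- two distinct points in idealSupp X a
  have h0m : (0 : ℂ) ∈ Metric.ball (0 : ℂ) 1 := by simp
  have h1m : (1/2 : ℂ) ∈ Metric.ball (0 : ℂ) 1 := by
    simp [Metric.mem_ball]
    norm_num
  have hne : φ 0 ≠ φ (1/2) := by
    intro h
    have := hφinj h0m h1m h
    norm_num at this
  have hw0 : φ 0 ∈ idealSupp X a := hZ (hφsub ⟨0, h0m, rfl⟩)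
  have hw1 : φ (1/2) ∈ idealSupp X a := hZ (hφsub ⟨1/2, h1m, rfl⟩)
  -- now show LocSet is empty
  ext z
  simp only [Set.mem_empty_iff_false, iff_false]
  intro hz
  set r := dist (φ 0) (φ (1/2)) / 2 with hr
  have hrpos : 0 < r := by
    have : 0 < dist (φ 0) (φ (1/2)) := dist_pos.mpr hne
    positivity
  obtain ⟨b, c, hcna, hbc, hsub⟩ := hz r hrpos
  have hb : b ≤ a := (hprime.mul_le.mp hbc).resolve_right hcna
  have hsupp : idealSupp X a ⊆ idealSupp X b := by
    rintro w hw ⟨f, hf, rest⟩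
    exact hw ⟨f, hb hf, rest⟩
  have hball : ∀ w ∈ idealSupp X a, w ∈ Metric.ball z r := by
    intro w hw
    exact hsub ⟨hw, hsupp hw⟩
  have d0 := hball _ hw0
  have d1 := hball _ hw1
  rw [Metric.mem_ball] at d0 d1
  have : dist (φ 0) (φ (1/2)) ≤ dist (φ 0) z + dist z (φ (1/2)) := dist_triangle _ _ _
  rw [dist_comm z] at this
  clear hcna hbc hsub hb hsupp hball
  linarith

end
end

section
/- Let H = ⊕_{n≥0} H_n be the orthogonal decomposition of a regular unitarily invariant space into homogeneous components, let p be a homogeneous prime ideal of ℂ[x_1,…,x_d], and let a ⊆ M(H) be the weak-* closure of p. Then [aH] ∩ ℂ[x_1,…,x_d] = p, where [aH] is the closed subspace spanned by {fh : f ∈ a, h ∈ H}. -/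
/-!
Let `N` be the degree of a polynomial `q ∈ [aH]`, and let `P` be the orthogonal projection
onto the (finite-dimensional) space `E` of polynomials of degree at most `N`. Since homogeneous
components of different degrees are orthogonal, `P` truncates a polynomial to its components of
degree `≤ N`, and as `p` is homogeneous it maps `p` into the finite-dimensional, hence closed,
space `F = E ∩ p`. By density of the polynomials `P (T r h) ∈ F` for all `r ∈ p` and `h ∈ H`; since
`P` has finite rank, `P (f h)` only sees finitely many matrix coefficients of `f`, so the weak
approximation of `f ∈ a` by the `T r` gives `P (f h) ∈ F` as well. Hence `P` maps `[aH]` into `F`,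
and `q = P q ∈ F ⊆ p`.
-/

open Finset

namespace MvPolynomial

variable {σ R : Type*} [CommSemiring R]

noncomputable def truncTotalDegree (N : ℕ) : MvPolynomial σ R →ₗ[R] MvPolynomial σ R :=
  ∑ n ∈ range (N + 1), homogeneousComponent n

theorem truncTotalDegree_apply (N : ℕ) (r : MvPolynomial σ R) :
    truncTotalDegree N r = ∑ n ∈ range (N + 1), homogeneousComponent n r :=
  LinearMap.sum_apply _ _ _

theorem homogeneousComponent_truncTotalDegree (N n : ℕ) (r : MvPolynomial σ R) :
    homogeneousComponent n (truncTotalDegree N r) =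
      if n ≤ N then homogeneousComponent n r else 0 := by
  simp [truncTotalDegree_apply, homogeneousComponent_of_mem (homogeneousComponent_mem _ r)]

theorem totalDegree_truncTotalDegree_le (N : ℕ) (r : MvPolynomial σ R) :
    (truncTotalDegree N r).totalDegree ≤ N := by
  rw [truncTotalDegree_apply]
  refine (totalDegree_finsetSum _ _).trans (Finset.sup_le fun n hn => ?_)
  exact (homogeneousComponent_isHomogeneous n r).totalDegree_le.trans
    (Nat.lt_succ_iff.mp (mem_range.mp hn))

theorem truncTotalDegree_mem {I : Ideal (MvPolynomial σ R)}
    (hI : ∀ f ∈ I, ∀ n : ℕ, homogeneousComponent n f ∈ I) (N : ℕ) {r : MvPolynomial σ R}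
    (hr : r ∈ I) : truncTotalDegree N r ∈ I := by
  rw [truncTotalDegree_apply]
  exact I.sum_mem fun n _ => hI r hr n

end MvPolynomial

open MvPolynomial

section PolynomialsInHilbertSpace

variable {σ 𝕜 H : Type*} [RCLike 𝕜] [NormedAddCommGroup H] [InnerProductSpace 𝕜 H]
  (e : MvPolynomial σ 𝕜 →ₗ[𝕜] H)
  (horth : ∀ (m n : ℕ) (q q' : MvPolynomial σ 𝕜), q.IsHomogeneous m →
    q'.IsHomogeneous n → m ≠ n → (inner 𝕜 (e q) (e q') : 𝕜) = 0)
include horth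

theorem inner_eq_zero_of_homogeneousComponent_eq_zero_of_totalDegree_le {N : ℕ}
    {t s : MvPolynomial σ 𝕜} (ht : ∀ n ≤ N, homogeneousComponent n t = 0)
    (hs : s.totalDegree ≤ N) : (inner 𝕜 (e t) (e s) : 𝕜) = 0 := by
  rw [← sum_homogeneousComponent t, ← sum_homogeneousComponent s, map_sum, map_sum, sum_inner]
  refine sum_eq_zero fun m _ => ?_
  rw [inner_sum]
  refine sum_eq_zero fun n hn => ?_
  by_cases hmN : m ≤ N
  · rw [ht m hmN, map_zero, inner_zero_left]
  · refine horth m n _ _ (homogeneousComponent_isHomogeneous m t)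
      (homogeneousComponent_isHomogeneous n s) ?_
    have := mem_range.mp hn
    omega

theorem starProjection_map_restrictTotalDegree_apply [Finite σ] (N : ℕ) (r : MvPolynomial σ 𝕜) :
    (Submodule.map e (restrictTotalDegree σ 𝕜 N)).starProjection (e r) =
      e (truncTotalDegree N r) := by
  refine Submodule.eq_starProjection_of_mem_of_inner_eq_zero
    ⟨_, (mem_restrictTotalDegree _ _ _).mpr (totalDegree_truncTotalDegree_le N r), rfl⟩ ?_
  rintro _ ⟨s, hs, rfl⟩
  rw [← map_sub]
  refine inner_eq_zero_of_homogeneousComponent_eq_zero_of_totalDegree_le e horth (fun n hn => ?_)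
    ((mem_restrictTotalDegree _ _ _).mp hs)
  rw [map_sub, homogeneousComponent_truncTotalDegree, if_pos hn, sub_self]

theorem starProjection_map_restrictTotalDegree_apply_mem [Finite σ]
    {I : Ideal (MvPolynomial σ 𝕜)} (hI : ∀ f ∈ I, ∀ n : ℕ, homogeneousComponent n f ∈ I)
    (N : ℕ) {r : MvPolynomial σ 𝕜} (hr : r ∈ I) :
    (Submodule.map e (restrictTotalDegree σ 𝕜 N)).starProjection (e r) ∈
      Submodule.map e (restrictTotalDegree σ 𝕜 N ⊓ I.restrictScalars 𝕜) := by
  rw [starProjection_map_restrictTotalDegree_apply e horth]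
  exact ⟨_, ⟨(mem_restrictTotalDegree _ _ _).mpr (totalDegree_truncTotalDegree_le N r),
    truncTotalDegree_mem hI N hr⟩, rfl⟩

end PolynomialsInHilbertSpace

section WeakApproximation

variable {𝕜 H : Type*} [RCLike 𝕜] [NormedAddCommGroup H] [InnerProductSpace 𝕜 H]

theorem norm_starProjection_le_sum_norm_inner {ι : Type*} [Fintype ι] {U : Submodule 𝕜 H}
    [U.HasOrthogonalProjection] (b : OrthonormalBasis ι 𝕜 U) (w : H) :
    ‖U.starProjection w‖ ≤ ∑ i, ‖(inner 𝕜 w (b i : H) : 𝕜)‖ := by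
  rw [Submodule.starProjection_apply, b.orthogonalProjectionOnto_apply_eq_sum,
    Submodule.coe_sum]
  refine (norm_sum_le _ _).trans (sum_le_sum fun i _ => ?_)
  rw [Submodule.coe_smul, norm_smul, norm_inner_symm]
  exact mul_le_of_le_one_right (norm_nonneg _) (b.orthonormal.1 i).le

theorem starProjection_apply_mem_of_weak_approx {U F : Submodule 𝕜 H} [FiniteDimensional 𝕜 U]
    (hF : IsClosed (F : Set H)) {S : Set (H →L[𝕜] H)}
    (hS : ∀ g ∈ S, ∀ h, U.starProjection (g h) ∈ F) {f : H →L[𝕜] H}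
    (hf : ∀ (m : ℕ) (x y : Fin m → H) (ε : ℝ), 0 < ε →
      ∃ g ∈ S, ∀ i, ‖(inner 𝕜 ((f - g) (x i)) (y i) : 𝕜)‖ < ε) (h : H) :
    U.starProjection (f h) ∈ F := by
  rw [← SetLike.mem_coe, ← hF.closure_eq, Metric.mem_closure_iff]
  intro ε hε
  set m := Module.finrank 𝕜 U
  set b := stdOrthonormalBasis 𝕜 U
  obtain ⟨g, hg, hlt⟩ := hf m (fun _ => h) (fun i => (b i : H)) (ε / (m + 1)) (by positivity)
  refine ⟨_, hS g hg h, ?_⟩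
  rw [dist_eq_norm, ← map_sub, ← sub_apply]
  calc ‖U.starProjection ((f - g) h)‖
      ≤ ∑ i, ‖(inner 𝕜 ((f - g) h) (b i : H) : 𝕜)‖ := norm_starProjection_le_sum_norm_inner b _
    _ ≤ ∑ _i : Fin m, ε / (m + 1) := sum_le_sum fun i _ => (hlt i).le
    _ < ε := by
      rw [sum_const, card_univ, Fintype.card_fin, nsmul_eq_mul, ← mul_div_assoc,
        div_lt_iff₀ (by positivity)]
      nlinarith

end WeakApproximation

theorem closure_span_inter_polynomials_eq_general
    {d : ℕ} {H : Type*} [NormedAddCommGroup H] [InnerProductSpace ℂ H]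
    (e : MvPolynomial (Fin d) ℂ →ₗ[ℂ] H)
    (he : Function.Injective e) (hdense : DenseRange e)
    (horth : ∀ (m n : ℕ) (q q' : MvPolynomial (Fin d) ℂ), q.IsHomogeneous m →
      q'.IsHomogeneous n → m ≠ n → (inner ℂ (e q) (e q') : ℂ) = 0)
    (A : Subalgebra ℂ (H →L[ℂ] H))
    (T : MvPolynomial (Fin d) ℂ →ₐ[ℂ] A)
    (hT : ∀ q q' : MvPolynomial (Fin d) ℂ, (T q : H →L[ℂ] H) (e q') = e (q * q'))
    (p : Ideal (MvPolynomial (Fin d) ℂ))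
    (hphom : ∀ f ∈ p, ∀ n : ℕ, MvPolynomial.homogeneousComponent n f ∈ p)
    (a : Ideal A)
    (hpa : ∀ q ∈ p, T q ∈ a)
    -- every member of a is a WOT limit of multiplication operators by members of p:
    (haw : ∀ f ∈ a, ∀ (m : ℕ) (x y : Fin m → H) (ε : ℝ), 0 < ε →
      ∃ q ∈ p, ∀ i, ‖(inner ℂ (((f : H →L[ℂ] H) - (T q : H →L[ℂ] H)) (x i)) (y i) : ℂ)‖ < ε) :
    ∀ q : MvPolynomial (Fin d) ℂ,
      e q ∈ closure (Submodule.span ℂ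
          {v : H | ∃ f ∈ a, ∃ h : H, v = (f : H →L[ℂ] H) h} : Set H)
        ↔ q ∈ p := by
  intro q
  refine ⟨fun hq => ?_, fun hq =>
    subset_closure (Submodule.subset_span ⟨T q, hpa q hq, e 1, by rw [hT, mul_one]⟩)⟩
  set E := Submodule.map e (restrictTotalDegree (Fin d) ℂ q.totalDegree)
  set F := Submodule.map e (restrictTotalDegree (Fin d) ℂ q.totalDegree ⊓ p.restrictScalars ℂ)
  have hF : IsClosed (F : Set H) := F.closed_of_finiteDimensional
  have hTp : ∀ r ∈ p, ∀ h, E.starProjection ((T r : H →L[ℂ] H) h) ∈ F := fun r hr h =>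
    hdense.induction_on h (hF.preimage (by fun_prop)) fun s => by
      rw [hT]
      exact starProjection_map_restrictTotalDegree_apply_mem e horth hphom _
        (p.mul_mem_right s hr)
  have ha : ∀ f ∈ a, ∀ h, E.starProjection ((f : H →L[ℂ] H) h) ∈ F := fun f hf =>
    starProjection_apply_mem_of_weak_approx hF (S := (fun r => (T r : H →L[ℂ] H)) '' p)
      (by rintro _ ⟨r, hr, rfl⟩; exact hTp r hr) fun m x y ε hε => by
        obtain ⟨r, hr, hlt⟩ := haw f hf m x y ε hε
        exact ⟨_, ⟨r, hr, rfl⟩, hlt⟩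
  have hqE : e q ∈ E := ⟨q, (mem_restrictTotalDegree _ _ _).mpr le_rfl, rfl⟩
  have hqF : E.starProjection (e q) ∈ F := by
    refine closure_minimal
      (Submodule.span_le (p := F.comap (E.starProjection : H →ₗ[ℂ] H)).mpr ?_)
      (hF.preimage E.starProjection.continuous) hq
    rintro _ ⟨f, hf, h, rfl⟩
    exact ha f hf h
  obtain ⟨r, ⟨-, hr⟩, hre⟩ := (Submodule.starProjection_eq_self_iff.mpr hqE) ▸ hqF
  rwa [← he hre]

theorem closure_span_inter_polynomials_eq
    {d : ℕ} {H : Type*} [NormedAddCommGroup H] [InnerProductSpace ℂ H] [CompleteSpace H]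
    (e : MvPolynomial (Fin d) ℂ →ₗ[ℂ] H)
    (he : Function.Injective e) (hdense : DenseRange e)
    (horth : ∀ (m n : ℕ) (q q' : MvPolynomial (Fin d) ℂ), q.IsHomogeneous m →
      q'.IsHomogeneous n → m ≠ n → (inner ℂ (e q) (e q') : ℂ) = 0)
    (A : Subalgebra ℂ (H →L[ℂ] H))
    (T : MvPolynomial (Fin d) ℂ →ₐ[ℂ] A)
    (hT : ∀ q q' : MvPolynomial (Fin d) ℂ, (T q : H →L[ℂ] H) (e q') = e (q * q'))
    (p : Ideal (MvPolynomial (Fin d) ℂ)) (hp : p.IsPrime)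
    (hphom : ∀ f ∈ p, ∀ n : ℕ, MvPolynomial.homogeneousComponent n f ∈ p)
    (a : Ideal A)
    (hpa : ∀ q ∈ p, T q ∈ a)
    -- every member of a is a WOT limit of multiplication operators by members of p:
    (haw : ∀ f ∈ a, ∀ (m : ℕ) (x y : Fin m → H) (ε : ℝ), 0 < ε →
      ∃ q ∈ p, ∀ i, ‖(inner ℂ (((f : H →L[ℂ] H) - (T q : H →L[ℂ] H)) (x i)) (y i) : ℂ)‖ < ε) :
    ∀ q : MvPolynomial (Fin d) ℂ,
      e q ∈ closure (Submodule.span ℂ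
          {v : H | ∃ f ∈ a, ∃ h : H, v = (f : H →L[ℂ] H) h} : Set H)
        ↔ q ∈ p :=
  closure_span_inter_polynomials_eq_general e he hdense horth A T hT p hphom a hpa haw
end

section
/- Let T = (T_1,…,T_d) be an absolutely continuous commuting K-contraction with M(H)-functional calculus f ↦ f(T). Then the weak-* spectrum of T is contained in supp(Ann(T)): if z ∉ supp(Ann(T)), write f = c + ∑_j (x_j − z_j) f_j with f ∈ Ann(T), c ≠ 0, f_j ∈ M(H); applying the functional calculus gives 0 = cI + ∑_j (T_j − z_j I) f_j(T), so z is not in the spectrum of T relative to the weak-* closed unital algebra it generates. -/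
/-!
STATEMENT 16: Let T be an absolutely continuous commuting K-contraction with
M(H)-functional calculus Ψ : M(H) → B(H), T_j = Ψ(x_j).  Then the weak-*
spectrum of T is contained in supp(Ann(T)): whenever z ∉ supp(Ann T), writing
f = c + ∑_j (x_j − z_j) f_j with f ∈ Ann(T) = ker Ψ and c ≠ 0 gives
I = ∑_j (T_j − z_j I)·(−c⁻¹ f_j(T)), so z is not in the spectrum of T relative
to any unital subalgebra 𝒜 ⊆ B(H) containing the range of Ψ — in particular
relative to the weak-* closed unital algebra generated by T.
-/

set_option synthInstance.maxHeartbeats 1000000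
set_option maxHeartbeats 1000000

noncomputable section

open scoped BigOperators

theorem weakstar_spectrum_subset_supp_ann
    {d : ℕ} {A : Subalgebra ℂ (Ball d → ℂ)} (X : Fin d → A)
    (hX : ∀ (j : Fin d) (w : Ball d), (X j : Ball d → ℂ) w = (w : Ed d) j)
    {H : Type*} [NormedAddCommGroup H] [NormedSpace ℂ H]
    -- the M(H)-functional calculus of T, with T_j = Ψ(X j):
    (Ψ : A →ₐ[ℂ] (H →L[ℂ] H))
    -- 𝒜: the weak-* closed unital algebra generated by T; for an absolutely
    -- continuous K-contraction it contains the range of the functional calculus: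
    (𝒜 : Subalgebra ℂ (H →L[ℂ] H)) (h𝒜 : ∀ f : A, Ψ f ∈ 𝒜) :
    {z : Ed d | ¬ ∃ g : Fin d → (H →L[ℂ] H), (∀ j, g j ∈ 𝒜) ∧
        (1 : H →L[ℂ] H) =
          ∑ j, (Ψ (X j) - algebraMap ℂ (H →L[ℂ] H) (z j)) * g j}
      ⊆ idealSupp X (RingHom.ker Ψ.toRingHom) := by
  intro z hz
  intro ⟨f, hf, c, hc, g, hfeq⟩
  apply hz
  refine ⟨fun j => (-c⁻¹) • Ψ (g j), fun j => Subalgebra.smul_mem _ (h𝒜 _) _, ?_⟩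
  have hΨf : Ψ f = 0 := hf
  have := congrArg Ψ hfeq
  rw [hΨf, map_add, map_sum] at this
  simp only [map_mul, map_sub, AlgHom.commutes] at this
  have h2 : ∑ j, (Ψ (X j) - algebraMap ℂ (H →L[ℂ] H) (z j)) * Ψ (g j)
      = - algebraMap ℂ (H →L[ℂ] H) c :=
    neg_eq_iff_eq_neg.mp (neg_eq_of_add_eq_zero_left this.symm)
  calc (1 : H →L[ℂ] H)
      = (-c⁻¹) • (- algebraMap ℂ (H →L[ℂ] H) c) := by
        rw [Algebra.algebraMap_eq_smul_one, smul_neg, smul_smul]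
        simp [hc]
    _ = (-c⁻¹) • ∑ j, (Ψ (X j) - algebraMap ℂ (H →L[ℂ] H) (z j)) * Ψ (g j) := by
        rw [h2]
    _ = ∑ j, (Ψ (X j) - algebraMap ℂ (H →L[ℂ] H) (z j)) * ((-c⁻¹) • Ψ (g j)) := by
        rw [Finset.smul_sum]
        exact Finset.sum_congr rfl fun j _ => (mul_smul_comm _ _ _).symm

end
end
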